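/- Let C = (1/3)·![![1,0,0],![1,0,0],![1,0,0]], H = (1/3)·(1 : Matrix (Fin 3) (Fin 3) ℚ), M 0 = (1/3)·![![2,0,0],![0,1,0],![0,0,1]], M 1 = (1/3)·![![2,0,1],![0,1,0],![0,0,1]], M' 0 = (1/3)·![![1,0,0],![0,2,0],![0,0,1]], M' 1 = (1/3)·![![1,0,0],![0,2,1],![0,0,1]], all 3×3 matrices over ℚ. For all binary words u₁, u₂ : List (Fin 2), the vector obtained from ![(1:ℚ),0,0] by applying C, then M d for the successive digits d of u₁, then H, then M' d for the successive digits d of u₂, equals ((1/3 : ℚ)^(u₁.length + u₂.length + 2)) • ![((enc u₁ : ℕ) : ℚ), ((enc u₂ : ℕ) : ℚ), 1], where enc w = w.foldl (fun acc d => 2 * acc + (d : ℕ)) 1. -/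

import Mathlib

/-- The value of the binary string `1w` read in base 2, most significant digit first. -/
def enc (w : List (Fin 2)) : ℕ :=
  w.foldl (fun acc d => 2 * acc + (d : ℕ)) 1

/-- Outcome-1 operation element of the superoperator `ℰ_¢`. -/
def C : Matrix (Fin 3) (Fin 3) ℚ := (1/3 : ℚ) • !![1, 0, 0; 1, 0, 0; 1, 0, 0]

/-- Outcome-1 operation element of the superoperator `ℰ_#`. -/
def H : Matrix (Fin 3) (Fin 3) ℚ := (1/3 : ℚ) • (1 : Matrix (Fin 3) (Fin 3) ℚ)

/-- Outcome-1 operation elements of the superoperators `ℰ_a` and `ℰ_b`. -/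
def M : Fin 2 → Matrix (Fin 3) (Fin 3) ℚ :=
  ![(1/3 : ℚ) • !![2, 0, 0; 0, 1, 0; 0, 0, 1],
    (1/3 : ℚ) • !![2, 0, 1; 0, 1, 0; 0, 0, 1]]

/-- Outcome-1 operation elements of the superoperators `ℰ'_a` and `ℰ'_b`. -/
def M' : Fin 2 → Matrix (Fin 3) (Fin 3) ℚ :=
  ![(1/3 : ℚ) • !![1, 0, 0; 0, 2, 0; 0, 0, 1],
    (1/3 : ℚ) • !![1, 0, 0; 0, 2, 1; 0, 0, 1]]

/-! Every matrix of the pass preserves the shape `c • ![x, y, 1]`: each factor contributes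
`1/3` to `c`, while `M d` (resp. `M' d`) uses the constant third coordinate to replace `x`
(resp. `y`) by `2 * x + d`. Reading `u₁` and `u₂` therefore runs Horner's rule for base 2
from the initial value `1` in the first and second coordinate. -/

open Matrix

theorem List.foldl_smul_of_step {α β R V : Type*} [Monoid R] [MulAction R V]
    (step : β → V → V) (g : α → V) (f : α → β → α) (k : R)
    (hstep : ∀ d c a, step d (c • g a) = (k * c) • g (f a d)) (w : List β) (c : R) (a : α) :
    w.foldl (fun v d => step d v) (c • g a) = (k ^ w.length * c) • g (w.foldl f a) := by
  induction w generalizing c a with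
  | nil => simp
  | cons d w ih =>
    rw [List.foldl_cons, hstep, ih, List.foldl_cons, List.length_cons, pow_succ, mul_assoc]

theorem Nat.cast_foldl_binary {R : Type*} [Semiring R] (l : List ℕ) (n : ℕ) :
    ((l.foldl (fun acc d => 2 * acc + d) n : ℕ) : R) =
      l.foldl (fun (a : R) (d : ℕ) => 2 * a + d) (n : R) :=
  (List.foldl_hom _ fun x y => by push_cast; rfl).symm

/- `enc` elaborates by coercing `w` to a `List ℕ` (as `w >>= pure ∘ Fin.val`),
not by casting each digit inside the fold. -/
theorem enc_eq_foldl_map (w : List (Fin 2)) :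
    enc w = (w.map Fin.val).foldl (fun acc d => 2 * acc + d) 1 := by
  simp only [enc, List.map_eq_flatMap]
  rfl

theorem cast_enc {R : Type*} [Semiring R] (w : List (Fin 2)) :
    ((enc w : ℕ) : R) = w.foldl (fun (a : R) (d : Fin 2) => 2 * a + (d : ℕ)) 1 := by
  rw [enc_eq_foldl_map, Nat.cast_foldl_binary, List.foldl_map, Nat.cast_one]

theorem M_mulVec (d : Fin 2) (c x y : ℚ) :
    M d *ᵥ (c • ![x, y, 1]) = (1/3 * c) • ![2 * x + (d : ℕ), y, 1] := by
  fin_cases d <;> ext i <;> fin_cases i <;>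
    simp [M, Matrix.mulVec, dotProduct, Fin.sum_univ_three] <;> ring

theorem M'_mulVec (d : Fin 2) (c x y : ℚ) :
    M' d *ᵥ (c • ![x, y, 1]) = (1/3 * c) • ![x, 2 * y + (d : ℕ), 1] := by
  fin_cases d <;> ext i <;> fin_cases i <;>
    simp [M', Matrix.mulVec, dotProduct, Fin.sum_univ_three] <;> ring

theorem C_mulVec_start : C *ᵥ ![(1 : ℚ), 0, 0] = (1/3 : ℚ) • ![1, 1, 1] := by
  ext i; fin_cases i <;> simp [C, Matrix.mulVec, dotProduct, Fin.sum_univ_three]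

theorem H_mulVec (v : Fin 3 → ℚ) : H *ᵥ v = (1/3 : ℚ) • v := by
  simp [H, Matrix.smul_mulVec]

theorem surviving_branch_state (u₁ u₂ : List (Fin 2)) :
    u₂.foldl (fun v d => (M' d).mulVec v)
        (H.mulVec (u₁.foldl (fun v d => (M d).mulVec v) (C.mulVec ![(1 : ℚ), 0, 0]))) =
      ((1/3 : ℚ) ^ (u₁.length + u₂.length + 2)) •
        ![((enc u₁ : ℕ) : ℚ), ((enc u₂ : ℕ) : ℚ), 1] := by
  rw [C_mulVec_start,
    List.foldl_smul_of_step (fun d v => M d *ᵥ v) (fun x => ![x, 1, 1]) _ _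
      (fun d c x => M_mulVec d c x 1),
    H_mulVec, smul_smul,
    List.foldl_smul_of_step (fun d v => M' d *ᵥ v) (fun y => ![_, y, 1]) _ _
      (fun d c y => M'_mulVec d c _ y),
    cast_enc, cast_enc]
  congr 1
  ring
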